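/- In a unital algebra, suppose $g$ and $e$ satisfy $e^2 = e$, $eg = ge$, and $g^2 = u^2 + v e g$ with $u$ invertible. Then for any scalar $\gamma$, the element $g' := (\gamma + (1-\gamma)e)g$ satisfies the quadratic relation $g'^2 = u^2\gamma^2 + u^2(1-\gamma^2)e + v\, e\, g'$. -/

import Mathlib

/-! Write `g' = p g` with `p = γ + (1 - γ) e`. Since `e` is idempotent, `p` lies in the commutative
algebra spanned by `1` and `e`, where `p² = γ² + (1 - γ²) e` and `e p = e`. As `p` commutes with
`g`, we get `g'² = p² g² = u² p² + v p² e g = u² p² + v e g`, and `e g' = e p g = e g`. -/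

section IdempotentDeformation

variable {R A : Type*} [CommRing R] [Ring A] [Algebra R A] {e : A}

theorem IsIdempotentElem.mul_smul_one_add_smul (he : IsIdempotentElem e) (γ : R) :
    e * (γ • (1 : A) + (1 - γ) • e) = e := by
  rw [mul_add, mul_smul_comm, mul_smul_comm, mul_one, he.eq, ← add_smul, add_sub_cancel, one_smul]

theorem IsIdempotentElem.smul_one_add_smul_mul_self (he : IsIdempotentElem e) (γ : R) :
    (γ • (1 : A) + (1 - γ) • e) * (γ • (1 : A) + (1 - γ) • e)
      = (γ * γ) • (1 : A) + (1 - γ * γ) • e := by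
  simp only [add_mul, mul_add, smul_mul_smul, one_mul, mul_one, he.eq]
  module

theorem Commute.smul_one_add_smul_right {g : A} (hc : Commute g e) (γ : R) :
    Commute g (γ • (1 : A) + (1 - γ) • e) :=
  ((Commute.one_right g).smul_right γ).add_right (hc.smul_right (1 - γ))

end IdempotentDeformation

/-- If `e² = e`, `eg = ge` and `g² = u² + v e g` with `u` invertible, then for
any scalar `γ`, the element `g' := (γ + (1-γ)e) g` satisfies
`g'² = u²γ² + u²(1-γ²) e + v e g'`. -/
theorem deformed_quadratic (R A : Type*) [CommRing R] [Ring A] [Algebra R A]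
    (u : Rˣ) (v γ : R) (g e : A)
    (he : e * e = e) (hc : e * g = g * e)
    (hq : g * g = ((u : R) * (u : R)) • (1 : A) + v • (e * g)) :
    ((γ • (1 : A) + (1 - γ) • e) * g) * ((γ • (1 : A) + (1 - γ) • e) * g)
      = ((u : R) * (u : R) * γ * γ) • (1 : A)
        + ((u : R) * (u : R) * (1 - γ * γ)) • e
        + v • (e * ((γ • (1 : A) + (1 - γ) • e) * g)) := by
  set p : A := γ • (1 : A) + (1 - γ) • e
  have hgp : Commute g p := Commute.smul_one_add_smul_right hc.symm γ
  have hep : e * p = e := IsIdempotentElem.mul_smul_one_add_smul he γ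
  have hpe : p * e = e := by rw [← ((Commute.refl e).smul_one_add_smul_right γ).eq, hep]
  calc p * g * (p * g) = p * p * (g * g) :=
        hgp.mul_mul_mul_comm p g
    _ = ((u : R) * (u : R)) • (p * p) + v • (p * (p * e) * g) := by
        rw [hq, mul_add, mul_smul_comm, mul_one, mul_smul_comm]
        simp only [mul_assoc]
    _ = _ := by
        rw [hpe, hpe, ← mul_assoc e p, hep, IsIdempotentElem.smul_one_add_smul_mul_self he γ]
        module
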